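/- arXiv:1801.02173 — 2 statements merged into one kernel-verified Lean document; each statement's English description precedes it below -/
import Mathlib

section
/- Let K(x; y_1,…,y_{m+1}) = (−1)^{m e(y_{m+1}−x)} (x−y_{m+1})^{−(m+1)} ∏_{j=1}^m χ_{(x∧y_{m+1}, x∨y_{m+1})}(y_j). Then there is a constant C depending only on m such that for all x, x', y_1,…,y_{m+1} ∈ ℝ with 12|x−x'| < min_{1≤j≤m+1} |x−y_j|, |K(x; y_1,…,y_{m+1}) − K(x'; y_1,…,y_{m+1})| ≤ C |x−x'| (Σ_{j=1}^{m+1} |x−y_j|)^{−(m+2)}. -/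
open MeasureTheory Filter Set
open scoped ENNReal BigOperators

noncomputable section

/-- The characteristic function `e = χ_{[0,∞)}`. -/
def eFun (t : ℝ) : ℕ := if 0 ≤ t then 1 else 0

/-- The kernel of the `(m+1)`-th order Calderón commutator:
`K(x; y₁,…,y_m, z) = (-1)^{m e(z - x)} (x - z)^{-(m+1)} ∏_j χ_{(x∧z, x∨z)}(y j)`,
where `z` plays the role of `y_{m+1}`. -/
def kernelK (m : ℕ) (x : ℝ) (y : Fin m → ℝ) (z : ℝ) : ℝ :=
  ((-1 : ℝ) ^ (m * eFun (z - x)) / (x - z) ^ (m + 1)) *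
    ∏ j, Set.indicator (Ioo (min x z) (max x z)) (fun _ => (1 : ℝ)) (y j)

end


lemma lt_iff_of_close {x x' y : ℝ} (h : |x - x'| < |x - y|) : x < y ↔ x' < y := by
  rcases abs_cases (x - y) with ⟨h1, h2⟩ | ⟨h1, h2⟩ <;>
  rcases abs_cases (x - x') with ⟨h3, h4⟩ | ⟨h3, h4⟩ <;>
  rw [h1] at h <;> rw [h3] at h <;>
  constructor <;> intro hh <;> linarith

lemma gt_iff_of_close {x x' y : ℝ} (h : |x - x'| < |x - y|) : y < x ↔ y < x' := by
  rcases abs_cases (x - y) with ⟨h1, h2⟩ | ⟨h1, h2⟩ <;>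
  rcases abs_cases (x - x') with ⟨h3, h4⟩ | ⟨h3, h4⟩ <;>
  rw [h1] at h <;> rw [h3] at h <;>
  constructor <;> intro hh <;> linarith

lemma abs_pow_sub_pow_le' (a b : ℝ) : ∀ n : ℕ,
    |a ^ (n+1) - b ^ (n+1)| ≤ ((n:ℝ)+1) * |a - b| * (max |a| |b|) ^ n := by
  intro n
  induction n with
  | zero => simp
  | succ n ih =>
    have hMa : |a| ≤ max |a| |b| := le_max_left _ _
    have hMb : |b| ≤ max |a| |b| := le_max_right _ _
    have hM0 : (0:ℝ) ≤ max |a| |b| := le_trans (abs_nonneg a) hMa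
    have h1 : a ^ (n+2) - b ^ (n+2) = a * (a ^ (n+1) - b ^ (n+1)) + (a - b) * b ^ (n+1) := by
      ring
    calc |a ^ (n+1+1) - b ^ (n+1+1)|
        ≤ |a * (a ^ (n+1) - b ^ (n+1))| + |(a - b) * b ^ (n+1)| := by
          rw [show n+1+1 = n+2 from rfl, h1]; exact abs_add_le _ _
      _ = |a| * |a ^ (n+1) - b ^ (n+1)| + |a - b| * |b| ^ (n+1) := by
          rw [abs_mul, abs_mul, abs_pow]
      _ ≤ (max |a| |b|) * (((n:ℝ)+1) * |a - b| * (max |a| |b|) ^ n)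
            + |a - b| * (max |a| |b|) ^ (n+1) := by
          gcongr
      _ = ((↑(n+1):ℝ)+1) * |a - b| * (max |a| |b|) ^ (n+1) := by push_cast; ring

lemma inv_pow_sub_bound (n : ℕ) (a b : ℝ) (h : 12 * |a - b| < |a|) :
    |1/a^(n+1) - 1/b^(n+1)| ≤ ((n:ℝ)+1) * 4^(n+1) * |a - b| / |a|^(n+2) := by
  have hd : (0:ℝ) ≤ |a - b| := abs_nonneg _
  have ha : 0 < |a| := lt_of_le_of_lt (by linarith) h
  have hba : |a| - |b| ≤ |a - b| := abs_sub_abs_le_abs_sub a b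
  have hab : |b| - |a| ≤ |a - b| := by
    have := abs_sub_abs_le_abs_sub b a
    rwa [abs_sub_comm] at this
  have hb : |a|/2 < |b| := by linarith
  have hb0 : 0 < |b| := by linarith
  have hM : max |a| |b| ≤ 2 * |a| := max_le (by linarith) (by linarith)
  have ha0 : a ≠ 0 := abs_pos.mp ha
  have hb0' : b ≠ 0 := abs_pos.mp hb0
  have heq : 1/a^(n+1) - 1/b^(n+1) = (b^(n+1) - a^(n+1)) / (a^(n+1) * b^(n+1)) := by
    field_simp
  rw [heq, abs_div, abs_mul, abs_pow, abs_pow]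
  have hnum : |b^(n+1) - a^(n+1)| ≤ ((n:ℝ)+1) * |a - b| * (2*|a|)^n := by
    calc |b^(n+1) - a^(n+1)| ≤ ((n:ℝ)+1) * |b - a| * (max |b| |a|)^n :=
          abs_pow_sub_pow_le' b a n
      _ = ((n:ℝ)+1) * |a - b| * (max |a| |b|)^n := by rw [abs_sub_comm, max_comm]
      _ ≤ ((n:ℝ)+1) * |a - b| * (2*|a|)^n := by
          gcongr
  have hden : |a|^(n+1) * (|a|/2)^(n+1) ≤ |a|^(n+1) * |b|^(n+1) := by
    gcongr

  have hdenpos : 0 < |a|^(n+1) * (|a|/2)^(n+1) := by positivity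
  calc |b^(n+1) - a^(n+1)| / (|a|^(n+1) * |b|^(n+1))
      ≤ (((n:ℝ)+1) * |a - b| * (2*|a|)^n) / (|a|^(n+1) * (|a|/2)^(n+1)) := by
        apply div_le_div₀ (by positivity) hnum hdenpos hden
    _ = ((n:ℝ)+1) * 2^(2*n+1) * |a - b| / |a|^(n+2) := by
        rw [mul_pow, div_pow]
        field_simp
        ring
    _ ≤ ((n:ℝ)+1) * 4^(n+1) * |a - b| / |a|^(n+2) := by
        gcongr
        calc (2:ℝ)^(2*n+1) ≤ 2^(2*n+2) := by
              apply pow_le_pow_right₀ (by norm_num); omega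
          _ = 4^(n+1) := by rw [show 2*n+2 = 2*(n+1) from by ring, pow_mul]; norm_num

/-- Lemma 2.4: regularity estimate for the Calderón commutator kernel
`K` in the first variable, where `z` plays the role of `y_{m+1}`. -/
theorem kernelK_regularity (m : ℕ) :
    ∃ C : ℝ, 0 < C ∧
      ∀ (x x' : ℝ) (y : Fin m → ℝ) (z : ℝ),
        (∀ j, 12 * |x - x'| < |x - y j|) → 12 * |x - x'| < |x - z| →
        |kernelK m x y z - kernelK m x' y z| ≤
          C * |x - x'| / ((∑ j, |x - y j|) + |x - z|) ^ (m + 2) := by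
  refine ⟨((m:ℝ)+1) * 4^(m+1) * ((m:ℝ)+1)^(m+2), by positivity, ?_⟩
  intro x x' y z hy hz
  have hd : (0:ℝ) ≤ |x - x'| := abs_nonneg _
  have hxz : |x - x'| < |x - z| := by linarith
  have haz : 0 < |x - z| := by linarith
  have hz0 : x ≠ z := sub_ne_zero.mp (abs_pos.mp haz)
  have htr : |x - z| ≤ |x - x'| + |x' - z| := abs_sub_le x x' z
  have haz' : 0 < |x' - z| := by linarith
  have hz0' : x' ≠ z := sub_ne_zero.mp (abs_pos.mp haz')
  have h1z : x < z ↔ x' < z := lt_iff_of_close hxz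
  -- equality of the sign exponents
  have he : eFun (z - x) = eFun (z - x') := by
    unfold eFun
    rcases lt_or_gt_of_ne hz0 with hlt | hgt
    · rw [if_pos (by linarith), if_pos (by linarith [h1z.mp hlt])]
    · have hx'z : z < x' := lt_of_le_of_ne (not_lt.mp (fun hc => absurd (h1z.mpr hc)
        (not_lt.mpr hgt.le))) (Ne.symm hz0')
      rw [if_neg (not_le.mpr (by linarith)), if_neg (not_le.mpr (by linarith))]
  -- equality of memberships
  have hmem : ∀ j, (y j ∈ Ioo (min x z) (max x z)) ↔ (y j ∈ Ioo (min x' z) (max x' z)) := by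
    intro j
    have hxy : |x - x'| < |x - y j| := by linarith [hy j]
    have h1 : x < y j ↔ x' < y j := lt_iff_of_close hxy
    have h2 : y j < x ↔ y j < x' := gt_iff_of_close hxy
    rcases lt_or_gt_of_ne hz0 with hlt | hgt
    · have hlt' : x' < z := h1z.mp hlt
      rw [min_eq_left hlt.le, max_eq_right hlt.le, min_eq_left hlt'.le, max_eq_right hlt'.le]
      simp only [Set.mem_Ioo]
      exact and_congr h1 Iff.rfl
    · have hgt' : z < x' := (gt_iff_of_close hxz).mp hgt
      rw [min_eq_right hgt.le, max_eq_left hgt.le, min_eq_right hgt'.le, max_eq_left hgt'.le]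
      simp only [Set.mem_Ioo]
      exact and_congr Iff.rfl h2
  have hprodeq : (∏ j, Set.indicator (Ioo (min x z) (max x z)) (fun _ => (1:ℝ)) (y j))
      = ∏ j, Set.indicator (Ioo (min x' z) (max x' z)) (fun _ => (1:ℝ)) (y j) := by
    apply Finset.prod_congr rfl
    intro j _
    by_cases hj : y j ∈ Ioo (min x z) (max x z)
    · rw [Set.indicator_of_mem hj, Set.indicator_of_mem ((hmem j).mp hj)]
    · rw [Set.indicator_of_notMem hj, Set.indicator_of_notMem (fun h => hj ((hmem j).mpr h))]
  have hSnn : (0:ℝ) ≤ (∑ j, |x - y j|) + |x - z| := by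
    have : (0:ℝ) ≤ ∑ j, |x - y j| := Finset.sum_nonneg fun j _ => abs_nonneg _
    linarith
  by_cases hall : ∀ j, y j ∈ Ioo (min x z) (max x z)
  · -- all indicators equal 1
    have hP : (∏ j, Set.indicator (Ioo (min x z) (max x z)) (fun _ => (1:ℝ)) (y j)) = 1 :=
      Finset.prod_eq_one fun j _ => Set.indicator_of_mem (hall j) _
    have hP' : (∏ j, Set.indicator (Ioo (min x' z) (max x' z)) (fun _ => (1:ℝ)) (y j)) = 1 :=
      hprodeq ▸ hP
    have hyz : ∀ j, |x - y j| ≤ |x - z| := by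
      intro j
      have h1 := hall j
      rw [Set.mem_Ioo] at h1
      rcases le_total x z with h | h
      · rw [min_eq_left h, max_eq_right h] at h1
        rw [abs_of_nonpos (by linarith : x - y j ≤ 0), abs_of_nonpos (by linarith : x - z ≤ 0)]
        linarith
      · rw [min_eq_right h, max_eq_left h] at h1
        rw [abs_of_nonneg (by linarith : 0 ≤ x - y j), abs_of_nonneg (by linarith : 0 ≤ x - z)]
        linarith
    have hS : (∑ j, |x - y j|) + |x - z| ≤ ((m:ℝ)+1) * |x - z| := by
      have h2 : ∑ j, |x - y j| ≤ ∑ _j : Fin m, |x - z| :=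
        Finset.sum_le_sum fun j _ => hyz j
      simp only [Finset.sum_const, Finset.card_univ, Fintype.card_fin, nsmul_eq_mul] at h2
      linarith
    unfold kernelK
    rw [hP, hP', mul_one, mul_one, he]
    have hab : (x - z) - (x' - z) = x - x' := by ring
    have hkey : 12 * |(x - z) - (x' - z)| < |x - z| := by rw [hab]; exact hz
    have hbnd := inv_pow_sub_bound m (x - z) (x' - z) hkey
    rw [hab] at hbnd
    set s : ℝ := (-1 : ℝ) ^ (m * eFun (z - x')) with hs
    have hsabs : |s| = 1 := by rw [hs, abs_pow, abs_neg, abs_one, one_pow]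
    have hsplit : s / (x - z) ^ (m+1) - s / (x' - z) ^ (m+1)
        = s * (1/(x - z)^(m+1) - 1/(x' - z)^(m+1)) := by ring
    rw [hsplit, abs_mul, hsabs, one_mul]
    calc |1/(x - z)^(m+1) - 1/(x' - z)^(m+1)|
        ≤ ((m:ℝ)+1) * 4^(m+1) * |x - x'| / |x - z|^(m+2) := hbnd
      _ ≤ ((m:ℝ)+1) * 4^(m+1) * ((m:ℝ)+1)^(m+2) * |x - x'|
            / ((∑ j, |x - y j|) + |x - z|) ^ (m + 2) := by
        have hsum0 : (0:ℝ) ≤ ∑ j, |x - y j| := Finset.sum_nonneg fun j _ => abs_nonneg _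
        have hSp : (0:ℝ) < (∑ j, |x - y j|) + |x - z| := by linarith
        rw [div_le_div_iff₀ (by positivity) (by positivity)]
        have hSpow : ((∑ j, |x - y j|) + |x - z|) ^ (m+2) ≤ ((m:ℝ)+1)^(m+2) * |x - z|^(m+2) := by
          rw [← mul_pow]
          exact pow_le_pow_left₀ hSnn hS _
        calc ((m:ℝ)+1) * 4^(m+1) * |x - x'| * ((∑ j, |x - y j|) + |x - z|) ^ (m+2)
            ≤ ((m:ℝ)+1) * 4^(m+1) * |x - x'| * (((m:ℝ)+1)^(m+2) * |x - z|^(m+2)) := by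
              gcongr
          _ = ((m:ℝ)+1) * 4^(m+1) * ((m:ℝ)+1)^(m+2) * |x - x'| * |x - z|^(m+2) := by ring
  · -- some indicator vanishes
    push_neg at hall
    obtain ⟨j0, hj0⟩ := hall
    have h0 : (∏ j, Set.indicator (Ioo (min x z) (max x z)) (fun _ => (1:ℝ)) (y j)) = 0 :=
      Finset.prod_eq_zero (Finset.mem_univ j0) (Set.indicator_of_notMem hj0 _)
    have h0' : (∏ j, Set.indicator (Ioo (min x' z) (max x' z)) (fun _ => (1:ℝ)) (y j)) = 0 :=
      hprodeq ▸ h0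
    unfold kernelK
    rw [h0, h0', mul_zero, mul_zero, sub_zero, abs_zero]
    positivity
end

section
/- Let m, κ ∈ ℕ, let U be an m-sublinear operator on functions on ℝⁿ, and let M_U^κ be the corresponding grand maximal operator. Suppose U is bounded from L^{q_1}(ℝⁿ) × ⋯ × L^{q_m}(ℝⁿ) to L^{q,∞}(ℝⁿ) for some q_1,…,q_m ∈ (1,∞) and q ∈ (1/m,∞) with 1/q = 1/q_1 + ⋯ + 1/q_m. Then there is a constant C such that for all bounded functions f_1,…,f_m, every cube Q₀ ⊂ ℝⁿ, and a.e. x ∈ Q₀, |U(f_1 χ_{3^κ Q₀},…, f_m χ_{3^κ Q₀})(x)| ≤ C ( ∏_{j=1}^m |f_j(x)| + M_U^κ(f_1 χ_{3^κ Q₀},…, f_m χ_{3^κ Q₀})(x) ). -/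
open MeasureTheory Filter Set
open scoped ENNReal BigOperators

noncomputable section

/-- Points of `ℝⁿ`. -/
abbrev En (n : ℕ) := Fin n → ℝ

/-- The closed cube with center `c` and side length `2r` (sides parallel to the axes). -/
def cube (n : ℕ) (c : En n) (r : ℝ) : Set (En n) := {x | ∀ i, |x i - c i| ≤ r}

/-- The open cube with center `c` and side length `2r`. -/
def openCube (n : ℕ) (c : En n) (r : ℝ) : Set (En n) := {x | ∀ i, |x i - c i| < r}

/-- Average (in `ℝ≥0∞`) of a nonnegative function over a set `Q`. -/
def avgC (n : ℕ) (g : En n → ℝ) (Q : Set (En n)) : ℝ≥0∞ :=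
  (volume Q)⁻¹ * ∫⁻ y in Q, ENNReal.ofReal (g y)

/-- Hardy–Littlewood maximal operator on `ℝⁿ` (over cubes). -/
def MopN (n : ℕ) (g : En n → ℝ) (x : En n) : ℝ≥0∞ :=
  ⨆ (c : En n) (r : ℝ) (_ : 0 < r) (_ : x ∈ cube n c r), avgC n (fun y => |g y|) (cube n c r)

/-- The Fujii–Wilson `A_∞` constant of a weight on `ℝⁿ`. -/
def AinfConstN (n : ℕ) (u : En n → ℝ) : ℝ≥0∞ :=
  ⨆ (c : En n) (r : ℝ) (_ : 0 < r),
    (∫⁻ y in cube n c r, ENNReal.ofReal (u y))⁻¹ *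
      ∫⁻ x in cube n c r, MopN n (Set.indicator (cube n c r) u) x

/-- The multilinear Muckenhoupt `A_{→P}` constant on `ℝⁿ` (exponents `p i > 1`). -/
def APconstN (n k : ℕ) (ptot : ℝ) (p : Fin k → ℝ) (w : Fin k → En n → ℝ) : ℝ≥0∞ :=
  ⨆ (c : En n) (r : ℝ) (_ : 0 < r),
    avgC n (fun x => ∏ i, w i x ^ (ptot / p i)) (cube n c r) *
      ∏ i, (avgC n (fun y => w i y ^ (-(1 / (p i - 1)))) (cube n c r)) ^ (ptot * (1 - 1 / p i))

/-- The `A_{(1,…,1)}` constant of a vector weight on `ℝⁿ`. -/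
def A11constN (n k : ℕ) (w : Fin k → En n → ℝ) : ℝ≥0∞ :=
  ⨆ (c : En n) (r : ℝ) (_ : 0 < r),
    avgC n (fun x => ∏ i, w i x ^ ((1 : ℝ) / k)) (cube n c r) *
      ∏ i, ((ENNReal.ofReal (essInf (w i) (volume.restrict (cube n c r))))⁻¹) ^ ((1 : ℝ) / k)

/-- Luxemburg norm `‖f‖_{L(log L)^γ, Q}`. -/
def luxNormQ (n : ℕ) (γ : ℝ) (Q : Set (En n)) (f : En n → ℝ) : ℝ :=
  sInf {t : ℝ | 0 < t ∧
    ∫⁻ y in Q, ENNReal.ofReal (|f y| / t * Real.log (Real.exp 1 + |f y| / t) ^ γ) ≤ volume Q}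

/-- `η`-sparse family of cubes (a cube is encoded by its center and half side length). -/
def IsSparseFam (n : ℕ) (η : ℝ) (S : Set (En n × ℝ)) : Prop :=
  S.Countable ∧ (∀ Q ∈ S, 0 < Q.2) ∧
    ∃ Esel : En n × ℝ → Set (En n),
      (∀ Q ∈ S, Esel Q ⊆ cube n Q.1 Q.2 ∧
        ENNReal.ofReal η * volume (cube n Q.1 Q.2) ≤ volume (Esel Q)) ∧
      S.Pairwise fun Q Q' => Disjoint (Esel Q) (Esel Q')

/-- The multilinear sparse operator `𝒜_{m;S,L(log L)^{→β}}`. -/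
def sparseOp (n m : ℕ) (β : Fin m → ℝ) (S : Set (En n × ℝ)) (f : Fin m → En n → ℝ)
    (x : En n) : ℝ≥0∞ :=
  ∑' Q : S, (cube n (Q : En n × ℝ).1 (Q : En n × ℝ).2).indicator
    (fun _ => ENNReal.ofReal (∏ j, luxNormQ n (β j) (cube n (Q : En n × ℝ).1 (Q : En n × ℝ).2) (f j))) x

/-- Weighted `L^p` norm on `ℝⁿ`. -/
def wLpNormN (n : ℕ) (p : ℝ) (w g : En n → ℝ) : ℝ≥0∞ :=
  (∫⁻ x, ENNReal.ofReal (|g x| ^ p * w x)) ^ (1 / p)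

/-- `L^p` norm of a complex-valued function on `ℝⁿ`. -/
def LpNormC (n : ℕ) (p : ℝ) (g : En n → ℂ) : ℝ≥0∞ :=
  (∫⁻ x, ENNReal.ofReal (‖g x‖ ^ p)) ^ (1 / p)

/-- Weak `L^p` quasinorm of a complex-valued function on `ℝⁿ`. -/
def wkNormC (n : ℕ) (p : ℝ) (g : En n → ℂ) : ℝ≥0∞ :=
  ⨆ (t : ℝ) (_ : 0 < t), ENNReal.ofReal t * (volume {x | t < ‖g x‖}) ^ (1 / p)

/-- The grand maximal operator `ℳ_U^κ` associated with an `m`-(sub)linear operator `U`. -/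
def MgrandU (n m κ : ℕ) (U : (Fin m → En n → ℂ) → En n → ℂ) (f : Fin m → En n → ℂ)
    (x : En n) : ℝ≥0∞ :=
  ⨆ (c : En n) (r : ℝ) (_ : 0 < r) (_ : x ∈ cube n c r),
    essSup (fun ξ => ENNReal.ofReal ‖
        (U f ξ - U (fun j => (cube n c ((3 : ℝ) ^ κ * r)).indicator (f j)) ξ)‖)
      (volume.restrict (cube n c r))

/-- John–Strömberg sharp maximal operator `M^♯_{0,s}` on `ℝⁿ`. -/
def MsharpN (n : ℕ) (s : ℝ) (g : En n → ℝ) (x : En n) : ℝ≥0∞ :=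
  ⨆ (c : En n) (r : ℝ) (_ : 0 < r) (_ : x ∈ cube n c r),
    ⨅ (b : ℝ), ⨅ (t : ℝ) (_ : 0 < t)
      (_ : volume {y ∈ cube n c r | t < |g y - b|} < ENNReal.ofReal s * volume (cube n c r)),
      ENNReal.ofReal t

/-- Euclidean distance between two sets of `ℝⁿ`. -/
def setDist (n : ℕ) (E F : Set (En n)) : ℝ :=
  sInf {d : ℝ | ∃ a ∈ E, ∃ b ∈ F, d = Real.sqrt (∑ i, (a i - b i) ^ 2)}

end

/-!
Suppose `|U F (x)| > C (∏ⱼ |Fⱼ(x)| + ℳ(x))` at a point `x` which is a Lebesgue point of every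
`|Fⱼ|^{qⱼ}` and a density point of the level set `{|U F| > α}` for a rational `α` just below
`|U F (x)|` (rational, so that almost every `x` is a density point of all these level sets).
On a small cube `Q` centred at `x`, the grand maximal function bounds `U F - U (F χ_{3^κ Q})`
by `ℳ(x)`, so more than half of `Q` lies in `{|U (F χ_{3^κ Q})| > α - ℳ(x)}`. The averages of
`|Fⱼ|^{qⱼ}` over `3^κ Q` are close to `|Fⱼ(x)|^{qⱼ}`, and `|3^κ Q| = 3^{κn} |Q|`, so once
`C ≥ C_U (2·3^{κn})^{1/q}` the weak-type bound caps that set at half of `Q`.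
-/

open scoped Topology
open Metric

theorem ENNReal.prod_rpow_eq_rpow_sum {ι : Type*} (s : Finset ι) (x : ℝ≥0∞) {f : ι → ℝ}
    (hf : ∀ i ∈ s, 0 ≤ f i) : ∏ i ∈ s, x ^ f i = x ^ ∑ i ∈ s, f i := by
  classical
  induction s using Finset.induction with
  | empty => simp
  | insert i s hi ih =>
    rw [Finset.prod_insert hi, Finset.sum_insert hi,
      ih fun j hj => hf j (Finset.mem_insert_of_mem hj),
      ENNReal.rpow_add_of_nonneg _ _ (hf i (Finset.mem_insert_self i s))
        (Finset.sum_nonneg fun j hj => hf j (Finset.mem_insert_of_mem hj))]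

theorem exists_pos_mul_prod_add_lt {ι : Type*} (s : Finset ι) {K t : ℝ} {b : ι → ℝ}
    (h : K * ∏ i ∈ s, b i < t) : ∃ δ > 0, K * ∏ i ∈ s, (b i + δ) < t := by
  have hlim : Tendsto (fun δ : ℝ => K * ∏ i ∈ s, (b i + δ)) (𝓝[>] 0) (𝓝 (K * ∏ i ∈ s, b i)) :=
    ((by fun_prop : Continuous fun δ : ℝ => K * ∏ i ∈ s, (b i + δ)).tendsto' 0 _
      (by simp)).mono_left nhdsWithin_le_nhds
  obtain ⟨δ, hδt, hδ⟩ := ((hlim.eventually (eventually_lt_nhds h)).and self_mem_nhdsWithin).exists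
  exact ⟨δ, hδ, hδt⟩

theorem exists_measurable_le_forall_setLIntegral_eq {α : Type*} [MeasurableSpace α]
    (μ : Measure α) {f : α → ℝ≥0∞} (hf : ∫⁻ x, f x ∂μ ≠ ∞) :
    ∃ g : α → ℝ≥0∞, Measurable g ∧ g ≤ f ∧
      ∀ s : Set α, ∫⁻ x in s, g x ∂μ = ∫⁻ x in s, f x ∂μ := by
  obtain ⟨g, hg, hgf, hfg⟩ := exists_measurable_le_lintegral_eq μ f
  refine ⟨g, hg, hgf, fun s => le_antisymm (lintegral_mono hgf) ?_⟩
  obtain ⟨φ, hφ, hφf, hfφ⟩ := exists_measurable_le_lintegral_eq (μ.restrict s) f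
  -- `max φ g` is another measurable minorant of `f`, so it cannot beat `g`
  have hmax : g =ᵐ[μ] fun x => max (φ x) (g x) :=
    ae_eq_of_ae_le_of_lintegral_le (ae_of_all _ fun x => le_max_right _ _) (hfg ▸ hf)
      (hφ.max hg).aemeasurable (hfg ▸ lintegral_mono fun x => max_le (hφf x) (hgf x))
  calc ∫⁻ x in s, f x ∂μ = ∫⁻ x in s, φ x ∂μ := hfφ
    _ ≤ ∫⁻ x in s, max (φ x) (g x) ∂μ := lintegral_mono fun x => le_max_left _ _
    _ = ∫⁻ x in s, g x ∂μ := lintegral_congr_ae (ae_restrict_of_ae hmax.symm)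

theorem ae_eventually_setLIntegral_closedBall_div_lt {β : Type*} [MetricSpace β]
    [MeasurableSpace β] [BorelSpace β] [SecondCountableTopology β] [HasBesicovitchCovering β]
    (μ : Measure β) [IsLocallyFiniteMeasure μ] {f : β → ℝ≥0∞} (hf : ∫⁻ x, f x ∂μ ≠ ∞) :
    ∀ᵐ x ∂μ, ∀ c, f x < c → ∀ᶠ r in 𝓝[>] 0,
      (∫⁻ y in closedBall x r, f y ∂μ) / μ (closedBall x r) < c := by
  -- `f` need not be measurable: differentiate a measurable minorant with the same set integrals
  obtain ⟨g, hg, hgf, hfg⟩ := exists_measurable_le_forall_setLIntegral_eq μ hf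
  have hg_fin : ∫⁻ x, g x ∂μ ≠ ∞ := by
    rwa [← setLIntegral_univ, hfg univ, setLIntegral_univ]
  filter_upwards [(Besicovitch.vitaliFamily μ).ae_tendsto_lintegral_div' hg hg_fin]
    with x hx c hc
  have hlim := hx.comp (Besicovitch.tendsto_filterAt μ x)
  simpa only [Function.comp_def, hfg] using hlim.eventually_lt_const ((hgf x).trans_lt hc)

theorem cube_eq_closedBall (n : ℕ) (c : En n) {r : ℝ} (hr : 0 ≤ r) :
    cube n c r = closedBall c r := by
  ext x
  simp only [cube, mem_ofPred_eq, mem_closedBall, dist_pi_le_iff hr, Real.dist_eq]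

theorem measurableSet_cube (n : ℕ) (c : En n) {r : ℝ} (hr : 0 ≤ r) :
    MeasurableSet (cube n c r) :=
  cube_eq_closedBall n c hr ▸ measurableSet_closedBall

theorem volume_cube_lt_top (n : ℕ) (c : En n) {r : ℝ} (hr : 0 ≤ r) :
    volume (cube n c r) < ∞ :=
  cube_eq_closedBall n c hr ▸ measure_closedBall_lt_top

theorem volume_closedBall_mul {n : ℕ} (x : En n) {a r : ℝ} (ha : 0 ≤ a) (hr : 0 ≤ r) :
    volume (closedBall x (a * r)) = ENNReal.ofReal (a ^ n) * volume (closedBall x r) := by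
  rw [Real.volume_pi_closedBall _ (mul_nonneg ha hr), Real.volume_pi_closedBall _ hr,
    ← ENNReal.ofReal_mul (by positivity), Fintype.card_fin, mul_left_comm, mul_pow]

theorem lintegral_ofReal_norm_indicator_rpow_ne_top {n : ℕ} {p M : ℝ} (hp : 0 < p)
    {B : Set (En n)} (hB : volume B ≠ ∞) {f : En n → ℂ} (hf : ∀ x, ‖f x‖ ≤ M) :
    ∫⁻ x, ENNReal.ofReal (‖B.indicator f x‖ ^ p) ≠ ∞ := by
  refine ne_top_of_le_ne_top (ENNReal.mul_ne_top ENNReal.ofReal_ne_top hB)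
    ((lintegral_mono fun x => ?_).trans (lintegral_indicator_const_le B (ENNReal.ofReal (M ^ p))))
  by_cases hx : x ∈ B
  · simp only [indicator_of_mem hx]
    exact ENNReal.ofReal_le_ofReal (Real.rpow_le_rpow (norm_nonneg _) (hf x) hp.le)
  · simp [indicator_of_notMem hx, Real.zero_rpow hp.ne']

theorem volume_lt_norm_le_of_wkNormC_le {n : ℕ} {p s : ℝ} {g : En n → ℂ} {B : ℝ≥0∞}
    (hp : 0 < p) (hs : 0 < s) (hg : wkNormC n p g ≤ B) :
    volume {x | s < ‖g x‖} ≤ (B / ENNReal.ofReal s) ^ p := by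
  have h : ENNReal.ofReal s * volume {x | s < ‖g x‖} ^ (1 / p) ≤ B :=
    le_trans (le_iSup₂ (f := fun t (_ : 0 < t) =>
      ENNReal.ofReal t * volume {x | t < ‖g x‖} ^ (1 / p)) s hs) hg
  rw [← ENNReal.rpow_inv_le_iff hp, ← one_div,
    ENNReal.le_div_iff_mul_le (by simp [hs]) (by simp), mul_comm]
  exact h

theorem LpNormC_indicator_le {n : ℕ} {p a : ℝ} {F : En n → ℂ} {R : Set (En n)} (hp : 0 < p)
    (ha : 0 ≤ a) (hR : MeasurableSet R)
    (hF : ∫⁻ y in R, ENNReal.ofReal (‖F y‖ ^ p) ≤ ENNReal.ofReal (a ^ p) * volume R) :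
    LpNormC n p (R.indicator F) ≤ ENNReal.ofReal a * volume R ^ (1 / p) := by
  have hsupp : ∫⁻ x, ENNReal.ofReal (‖R.indicator F x‖ ^ p) =
      ∫⁻ y in R, ENNReal.ofReal (‖F y‖ ^ p) := by
    rw [← lintegral_indicator hR]
    congr 1
    funext x
    by_cases hx : x ∈ R <;> simp [hx, Real.zero_rpow hp.ne']
  calc LpNormC n p (R.indicator F)
      ≤ (ENNReal.ofReal (a ^ p) * volume R) ^ (1 / p) := by
        rw [LpNormC, hsupp]
        exact ENNReal.rpow_le_rpow hF (by positivity)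
    _ = ENNReal.ofReal a * volume R ^ (1 / p) := by
        rw [ENNReal.mul_rpow_of_nonneg _ _ (by positivity),
          ENNReal.ofReal_rpow_of_nonneg (by positivity) (by positivity),
          ← Real.rpow_mul ha, mul_one_div_cancel hp.ne', Real.rpow_one]

theorem ae_restrict_ofReal_norm_sub_le_MgrandU {n m : ℕ} (κ : ℕ)
    (U : (Fin m → En n → ℂ) → En n → ℂ) (F : Fin m → En n → ℂ) {c x : En n} {r : ℝ}
    (hr : 0 < r) (hx : x ∈ cube n c r) :
    ∀ᵐ y ∂volume.restrict (cube n c r),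
      ENNReal.ofReal ‖U F y - U (fun j => (cube n c (3 ^ κ * r)).indicator (F j)) y‖ ≤
        MgrandU n m κ U F x := by
  filter_upwards [ENNReal.ae_le_essSup fun y =>
    ENNReal.ofReal ‖U F y - U (fun j => (cube n c (3 ^ κ * r)).indicator (F j)) y‖] with y hy
  exact hy.trans (le_iSup₂_of_le c r (le_iSup₂_of_le hr hx le_rfl))

theorem measure_inter_lt_norm_le_of_ae_norm_sub_le {α E : Type*} [MeasurableSpace α]
    [SeminormedAddCommGroup E] {μ : Measure α} {g h : α → E} {Q : Set α} (hQ : MeasurableSet Q)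
    {a M : ℝ} (hgh : ∀ᵐ y ∂μ.restrict Q, ‖g y - h y‖ ≤ M) :
    μ ({y | a < ‖g y‖} ∩ Q) ≤ μ {y | a - M < ‖h y‖} := by
  refine measure_mono_ae ?_
  filter_upwards [(ae_restrict_iff' hQ).1 hgh] with y hy hyQ
  have hga : a < ‖g y‖ := hyQ.1
  show a - M < ‖h y‖
  linarith [hy hyQ.2, norm_sub_norm_le (g y) (h y)]

theorem exists_rat_level_of_ofReal_mul_add_lt {C A y : ℝ} {M : ℝ≥0∞} (hC : 1 ≤ C) (hA : 0 ≤ A)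
    (h : ENNReal.ofReal C * (ENNReal.ofReal A + M) < ENNReal.ofReal y) :
    ∃ (α : ℚ) (M' : ℝ), 0 ≤ M' ∧ M ≤ ENNReal.ofReal M' ∧ C * A < α - M' ∧ (α : ℝ) < y := by
  have hM : M ≠ ∞ := by
    rintro rfl
    simp [ENNReal.mul_top, (by linarith : (0 : ℝ) < C)] at h
  have hCAM : C * (A + M.toReal) < y := by
    rw [← ENNReal.ofReal_toReal hM, ← ENNReal.ofReal_add hA ENNReal.toReal_nonneg,
      ← ENNReal.ofReal_mul (by linarith), ENNReal.ofReal_lt_ofReal_iff'] at h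
    exact h.1
  have hlt : C * A + M.toReal < y := by nlinarith [ENNReal.toReal_nonneg (a := M)]
  obtain ⟨α, hα₁, hα₂⟩ := exists_rat_btwn hlt
  exact ⟨α, M.toReal, ENNReal.toReal_nonneg, (ENNReal.ofReal_toReal hM).ge, by linarith, hα₂⟩

section GrandMaximal

variable {n m κ : ℕ} {U : (Fin m → En n → ℂ) → En n → ℂ} {q : Fin m → ℝ} {qt CU : ℝ}

theorem volume_lt_norm_indicator_le
    (hU : ∀ f : Fin m → En n → ℂ,
      wkNormC n qt (U f) ≤ ENNReal.ofReal CU * ∏ i, LpNormC n (q i) (f i))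
    (hq : ∀ i, 0 < q i) (hqt : 1 / qt = ∑ i, 1 / q i) (hqt0 : 0 < qt)
    {F : Fin m → En n → ℂ} {R : Set (En n)} (hR : MeasurableSet R) {a : Fin m → ℝ}
    (ha : ∀ j, 0 ≤ a j)
    (hFR : ∀ j, ∫⁻ y in R, ENNReal.ofReal (‖F j y‖ ^ q j) ≤ ENNReal.ofReal (a j ^ q j) * volume R)
    {s t : ℝ} (hs : 0 < s) (ht : 0 ≤ t) (hst : CU * ∏ j, a j ≤ t * s) :
    volume {y | s < ‖U (fun j => R.indicator (F j)) y‖} ≤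
      ENNReal.ofReal (t ^ qt) * volume R := by
  have ha_prod : 0 ≤ ∏ j, a j := Finset.prod_nonneg fun j _ => ha j
  have hLp : ∏ j, LpNormC n (q j) (R.indicator (F j)) ≤
      ENNReal.ofReal (∏ j, a j) * volume R ^ (1 / qt) :=
    calc ∏ j, LpNormC n (q j) (R.indicator (F j))
        ≤ ∏ j, ENNReal.ofReal (a j) * volume R ^ (1 / q j) :=
          Finset.prod_le_prod' fun j _ => LpNormC_indicator_le (hq j) (ha j) hR (hFR j)
      _ = ENNReal.ofReal (∏ j, a j) * volume R ^ (1 / qt) := by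
          rw [Finset.prod_mul_distrib, ENNReal.ofReal_prod_of_nonneg fun j _ => ha j,
            ENNReal.prod_rpow_eq_rpow_sum _ _ fun j _ => (one_div_pos.2 (hq j)).le, hqt]
  have hB : ENNReal.ofReal CU * ∏ j, LpNormC n (q j) (R.indicator (F j)) ≤
      ENNReal.ofReal t * volume R ^ (1 / qt) * ENNReal.ofReal s :=
    calc ENNReal.ofReal CU * ∏ j, LpNormC n (q j) (R.indicator (F j))
        ≤ ENNReal.ofReal (CU * ∏ j, a j) * volume R ^ (1 / qt) := by
          rw [ENNReal.ofReal_mul' ha_prod, mul_assoc]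
          gcongr
      _ ≤ ENNReal.ofReal (t * s) * volume R ^ (1 / qt) := by gcongr
      _ = ENNReal.ofReal t * volume R ^ (1 / qt) * ENNReal.ofReal s := by
          rw [ENNReal.ofReal_mul ht]
          ring
  calc volume {y | s < ‖U (fun j => R.indicator (F j)) y‖}
      ≤ ((ENNReal.ofReal CU * ∏ j, LpNormC n (q j) (R.indicator (F j))) /
          ENNReal.ofReal s) ^ qt :=
        volume_lt_norm_le_of_wkNormC_le hqt0 hs (hU _)
    _ ≤ (ENNReal.ofReal t * volume R ^ (1 / qt)) ^ qt := by
        gcongr ?_ ^ _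
        exact ENNReal.div_le_of_le_mul hB
    _ = ENNReal.ofReal (t ^ qt) * volume R := by
        rw [ENNReal.mul_rpow_of_nonneg _ _ hqt0.le, ← ENNReal.rpow_mul, one_div_mul_cancel hqt0.ne',
          ENNReal.rpow_one, ENNReal.ofReal_rpow_of_nonneg ht hqt0.le]

theorem ofReal_norm_le_of_lebesgue_of_density
    (hU : ∀ f : Fin m → En n → ℂ,
      wkNormC n qt (U f) ≤ ENNReal.ofReal CU * ∏ i, LpNormC n (q i) (f i))
    (hq : ∀ i, 0 < q i) (hqt : 1 / qt = ∑ i, 1 / q i) (hqt0 : 0 < qt)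
    {C : ℝ} (hC : 1 ≤ C) (hCU : CU * (2 * (3 ^ κ) ^ n) ^ qt⁻¹ ≤ C)
    {F : Fin m → En n → ℂ} {x : En n}
    (hleb : ∀ j c, ENNReal.ofReal (‖F j x‖ ^ q j) < c → ∀ᶠ r in 𝓝[>] 0,
      (∫⁻ y in closedBall x r, ENNReal.ofReal (‖F j y‖ ^ q j)) / volume (closedBall x r) < c)
    (hdens : ∀ α : ℚ, (α : ℝ) < ‖U F x‖ → Tendsto (fun r =>
      volume ({y | (α : ℝ) < ‖U F y‖} ∩ closedBall x r) / volume (closedBall x r))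
        (𝓝[>] 0) (𝓝 1)) :
    ENNReal.ofReal ‖U F x‖ ≤
      ENNReal.ofReal C * (ENNReal.ofReal (∏ j, ‖F j x‖) + MgrandU n m κ U F x) := by
  by_contra! hlt
  have hA : 0 ≤ ∏ j, ‖F j x‖ := Finset.prod_nonneg fun j _ => norm_nonneg _
  obtain ⟨α, M, hM0, hM, hs, hα⟩ := exists_rat_level_of_ofReal_mul_add_lt hC hA hlt
  set s : ℝ := α - M
  set θ : ℝ := (2 * (3 ^ κ) ^ n) ^ qt⁻¹
  have hθ : 0 < θ := by positivity
  obtain ⟨δ, hδ, hδs⟩ := exists_pos_mul_prod_add_lt Finset.univ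
    (lt_of_le_of_lt (mul_le_mul_of_nonneg_right hCU hA) hs)
  have hFδ : ∀ j, ENNReal.ofReal (‖F j x‖ ^ q j) < ENNReal.ofReal ((‖F j x‖ + δ) ^ q j) :=
    fun j => (ENNReal.ofReal_lt_ofReal_iff (by positivity)).2
      (Real.rpow_lt_rpow (norm_nonneg _) (lt_add_of_pos_right _ hδ) (hq j))
  obtain ⟨ρ, hρdens, hρleb, hρ⟩ := (((hdens α hα).eventually_const_lt ENNReal.one_half_lt_one).and
    ((eventually_all.2 fun j => eventually_nhdsGT_zero_mul_left (by positivity : (0 : ℝ) < 3 ^ κ)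
      (hleb j _ (hFδ j))).and self_mem_nhdsWithin)).exists
  set Q := closedBall x ρ
  set R := closedBall x (3 ^ κ * ρ)
  have hρR : 0 < 3 ^ κ * ρ := by positivity
  have hR : volume R = ENNReal.ofReal ((3 ^ κ) ^ n) * volume Q :=
    volume_closedBall_mul x (by positivity) hρ.le
  have hFR : ∀ j, ∫⁻ y in R, ENNReal.ofReal (‖F j y‖ ^ q j) ≤
      ENNReal.ofReal ((‖F j x‖ + δ) ^ q j) * volume R := fun j =>
    ((ENNReal.div_lt_iff (Or.inl (measure_closedBall_pos volume x hρR).ne')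
      (Or.inl measure_closedBall_lt_top.ne)).1 (hρleb j)).le
  have hs0 : 0 < s := (mul_nonneg (by linarith) hA).trans_lt hs
  have hweak : volume {y | s < ‖U (fun j => R.indicator (F j)) y‖} ≤ 2⁻¹ * volume Q := by
    refine (volume_lt_norm_indicator_le hU hq hqt hqt0 measurableSet_closedBall
      (fun j => by positivity) hFR hs0 (inv_nonneg.2 hθ.le) ?_).trans_eq ?_
    · rw [le_inv_mul_iff₀ hθ]
      linarith
    · rw [hR, Real.inv_rpow (by positivity), Real.rpow_inv_rpow (by positivity) hqt0.ne',
        ← mul_assoc, ← ENNReal.ofReal_mul (by positivity),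
        show ((2 : ℝ) * (3 ^ κ) ^ n)⁻¹ * (3 ^ κ) ^ n = 2⁻¹ by field_simp,
        ENNReal.ofReal_inv_of_pos two_pos, ENNReal.ofReal_ofNat]
  have hgrand := ae_restrict_ofReal_norm_sub_le_MgrandU κ U F hρ
    (fun i => by simp [hρ.le] : x ∈ cube n x ρ)
  rw [cube_eq_closedBall n x hρ.le, cube_eq_closedBall n x hρR.le] at hgrand
  have hsub : volume ({y | (α : ℝ) < ‖U F y‖} ∩ Q) ≤
      volume {y | s < ‖U (fun j => R.indicator (F j)) y‖} := by
    refine measure_inter_lt_norm_le_of_ae_norm_sub_le measurableSet_closedBall ?_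
    filter_upwards [hgrand] with y hy using (ENNReal.ofReal_le_ofReal_iff hM0).1 (hy.trans hM)
  have hdensQ : 2⁻¹ * volume Q < volume ({y | (α : ℝ) < ‖U F y‖} ∩ Q) :=
    (ENNReal.lt_div_iff_mul_lt (Or.inl (measure_closedBall_pos volume x hρ).ne')
      (Or.inl measure_closedBall_lt_top.ne)).1 hρdens
  exact lt_irrefl _ (hdensQ.trans_le (hsub.trans hweak))

theorem ae_ofReal_norm_le_MgrandU
    (hU : ∀ f : Fin m → En n → ℂ,
      wkNormC n qt (U f) ≤ ENNReal.ofReal CU * ∏ i, LpNormC n (q i) (f i))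
    (hq : ∀ i, 0 < q i) (hqt : 1 / qt = ∑ i, 1 / q i) (hqt0 : 0 < qt)
    {C : ℝ} (hC : 1 ≤ C) (hCU : CU * (2 * (3 ^ κ) ^ n) ^ qt⁻¹ ≤ C)
    {F : Fin m → En n → ℂ} (hF : ∀ j, ∫⁻ x, ENNReal.ofReal (‖F j x‖ ^ q j) ≠ ∞) :
    ∀ᵐ x, ENNReal.ofReal ‖U F x‖ ≤
      ENNReal.ofReal C * (ENNReal.ofReal (∏ j, ‖F j x‖) + MgrandU n m κ U F x) := by
  have hleb := ae_all_iff.2 fun j => ae_eventually_setLIntegral_closedBall_div_lt volume (hF j)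
  have hdens := ae_all_iff.2 fun α : ℚ => ae_imp_of_ae_restrict
    (Besicovitch.ae_tendsto_measure_inter_div volume {y | (α : ℝ) < ‖U F y‖})
  filter_upwards [hleb, hdens] with x hxleb hxdens
  exact ofReal_norm_le_of_lebesgue_of_density hU hq hqt hqt0 hC hCU hxleb hxdens

end GrandMaximal

theorem local_estimate_sublinear_general (n m κ : ℕ) (U : (Fin m → En n → ℂ) → En n → ℂ)
    (q : Fin m → ℝ) (hq : ∀ i, 1 < q i) (qt : ℝ) (hqt : 1 / qt = ∑ i, 1 / q i)
    (hqtl : 1 / (m : ℝ) < qt)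
    (CU : ℝ) (hU : ∀ f : Fin m → En n → ℂ,
      wkNormC n qt (U f) ≤ ENNReal.ofReal CU * ∏ i, LpNormC n (q i) (f i)) :
    ∃ C : ℝ, 0 < C ∧
      ∀ f : Fin m → En n → ℂ, (∀ j, ∃ M, ∀ x, ‖f j x‖ ≤ M) →
        ∀ (c₀ : En n) (r₀ : ℝ), 0 < r₀ →
          ∀ᵐ x ∂(volume.restrict (cube n c₀ r₀)),
            ENNReal.ofReal ‖
                U (fun j => (cube n c₀ ((3 : ℝ) ^ κ * r₀)).indicator (f j)) x‖ ≤
              ENNReal.ofReal C *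
                (ENNReal.ofReal (∏ j, ‖f j x‖) +
                  MgrandU n m κ U
                    (fun j => (cube n c₀ ((3 : ℝ) ^ κ * r₀)).indicator (f j)) x) := by
  have hq0 : ∀ i, 0 < q i := fun i => one_pos.trans (hq i)
  have hqt0 : 0 < qt := lt_of_le_of_lt (by positivity) hqtl
  refine ⟨max 1 (CU * (2 * (3 ^ κ) ^ n) ^ qt⁻¹), one_pos.trans_le (le_max_left _ _),
    fun f hf c₀ r₀ hr₀ => ?_⟩
  set B := cube n c₀ (3 ^ κ * r₀)
  have hr₀B : r₀ ≤ 3 ^ κ * r₀ := le_mul_of_one_le_left hr₀.le (one_le_pow₀ (by norm_num))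
  have hF : ∀ j, ∫⁻ x, ENNReal.ofReal (‖B.indicator (f j) x‖ ^ q j) ≠ ∞ := fun j =>
    lintegral_ofReal_norm_indicator_rpow_ne_top (hq0 j)
      (volume_cube_lt_top n c₀ (by positivity)).ne (hf j).choose_spec
  filter_upwards [ae_restrict_of_ae (ae_ofReal_norm_le_MgrandU (κ := κ) hU hq0 hqt hqt0
      (le_max_left _ _) (le_max_right _ _) hF),
    ae_restrict_mem (measurableSet_cube n c₀ hr₀.le)] with x hx hxQ
  have hxB : x ∈ B := fun i => (hxQ i).trans hr₀B
  simpa only [indicator_of_mem hxB] using hx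

/-- Lemma 3.2: local pointwise estimate for an `m`-sublinear operator
that is bounded into weak `L^q`, in terms of its grand maximal operator. -/
theorem local_estimate_sublinear (n m κ : ℕ) (U : (Fin m → En n → ℂ) → En n → ℂ)
    (hadd : ∀ (f : Fin m → En n → ℂ) (i : Fin m) (g h : En n → ℂ) (x : En n),
      ‖U (Function.update f i (g + h)) x‖ ≤
        ‖U (Function.update f i g) x‖ + ‖U (Function.update f i h) x‖)
    (hsmul : ∀ (f : Fin m → En n → ℂ) (i : Fin m) (t : ℂ) (g : En n → ℂ),
      U (Function.update f i (t • g)) = fun x => t * U (Function.update f i g) x)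
    (q : Fin m → ℝ) (hq : ∀ i, 1 < q i) (qt : ℝ) (hqt : 1 / qt = ∑ i, 1 / q i)
    (hqtl : 1 / (m : ℝ) < qt)
    (CU : ℝ) (hU : ∀ f : Fin m → En n → ℂ,
      wkNormC n qt (U f) ≤ ENNReal.ofReal CU * ∏ i, LpNormC n (q i) (f i)) :
    ∃ C : ℝ, 0 < C ∧
      ∀ f : Fin m → En n → ℂ, (∀ j, ∃ M, ∀ x, ‖f j x‖ ≤ M) →
        ∀ (c₀ : En n) (r₀ : ℝ), 0 < r₀ →
          ∀ᵐ x ∂(volume.restrict (cube n c₀ r₀)),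
            ENNReal.ofReal ‖
                U (fun j => (cube n c₀ ((3 : ℝ) ^ κ * r₀)).indicator (f j)) x‖ ≤
              ENNReal.ofReal C *
                (ENNReal.ofReal (∏ j, ‖f j x‖) +
                  MgrandU n m κ U
                    (fun j => (cube n c₀ ((3 : ℝ) ^ κ * r₀)).indicator (f j)) x) :=
  local_estimate_sublinear_general n m κ U q hq qt hqt hqtl CU hU
end
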